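/- Let f : F_p^2 → ℚ be equidistributed in all directions except possibly d_1, ..., d_k (k ≥ 1), and assume the total sum of f is such that f is not equidistributed in d_1,...,d_k. Then f can be written as a finite rational linear combination of indicator functions of lines, each line having one of the directions d_1, ..., d_k. -/

import Mathlib

/-- Sum of `f` over the line through `x` with direction vector `u`. -/
def lineSum (p : ℕ) [Fact p.Prime] (f : ZMod p × ZMod p → ℚ)
    (u x : ZMod p × ZMod p) : ℚ :=
  ∑ t : ZMod p, f (x + t • u)

/-- Direction vectors of the `p+1` directions: `some m` has slope `m`, `none` is vertical. -/
def dirVec (p : ℕ) : Option (ZMod p) → ZMod p × ZMod p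
  | none => (0, 1)
  | some m => (1, m)

/-- `f` is equidistributed in the direction of the vector `u`. -/
def FEquidistributed (p : ℕ) [Fact p.Prime] (f : ZMod p × ZMod p → ℚ)
    (u : ZMod p × ZMod p) : Prop :=
  ∀ x y : ZMod p × ZMod p, lineSum p f u x = lineSum p f u y

/-- Indicator of the line of direction `d` and intercept `b`:
for `d = some m` the line `y = m x + b`, for `d = none` the vertical line `x = b`. -/
def lineInd (p : ℕ) : Option (ZMod p) → ZMod p → ZMod p × ZMod p → ℚ
  | some m, b, w => if w.2 = m * w.1 + b then 1 else 0
  | none, b, w => if w.1 = b then 1 else 0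

/-!
The `p + 1` lines through a point `w` cover `w` itself `p + 1` times and every other point
once, so the sum of the line sums through `w` over all directions is `p * f w + ∑ f`. In a
direction where `f` is equidistributed every line sum is `(∑ f) / p`; hence `p * f w` is the sum
of the line sums through `w` in the directions of `D`, up to a constant. As a function of `w`,
the line sum in direction `d` is a combination of the indicators of the lines of direction `d`,
and a constant is a combination of the indicators of the parallel lines of any one direction
`d₀ ∈ D`.
-/

section LineDecomposition

variable {p : ℕ}

def intercept : Option (ZMod p) → ZMod p × ZMod p → ZMod p
  | none, w => w.1
  | some m, w => w.2 - m * w.1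

def basePoint : Option (ZMod p) → ZMod p → ZMod p × ZMod p
  | none, b => (b, 0)
  | some _, b => (0, b)

lemma lineInd_eq_ite (d : Option (ZMod p)) (b : ZMod p) (w : ZMod p × ZMod p) :
    lineInd p d b w = if intercept d w = b then 1 else 0 := by
  cases d with
  | none => rfl
  | some m => simp only [lineInd, intercept, sub_eq_iff_eq_add']

lemma sum_lineInd [NeZero p] (d : Option (ZMod p)) (w : ZMod p × ZMod p) :
    ∑ b : ZMod p, lineInd p d b w = 1 := by
  simp [lineInd_eq_ite]

lemma exists_basePoint_intercept_add_smul (d : Option (ZMod p)) (w : ZMod p × ZMod p) :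
    ∃ t : ZMod p, basePoint d (intercept d w) + t • dirVec p d = w := by
  cases d with
  | none => exact ⟨w.2, by simp [basePoint, intercept, dirVec]⟩
  | some m => exact ⟨w.1, by ext <;> simp [basePoint, intercept, dirVec]; ring⟩

variable [Fact p.Prime]

lemma lineSum_add_smul (f : ZMod p × ZMod p → ℚ) (u x : ZMod p × ZMod p) (s : ZMod p) :
    lineSum p f u (x + s • u) = lineSum p f u x :=
  Fintype.sum_equiv (Equiv.addLeft s) _ _ fun t => by
    simp only [Equiv.coe_addLeft, add_smul, add_assoc]

lemma lineSum_dirVec_eq_sum_lineInd (f : ZMod p × ZMod p → ℚ) (d : Option (ZMod p))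
    (w : ZMod p × ZMod p) :
    lineSum p f (dirVec p d) w
      = ∑ b : ZMod p, lineSum p f (dirVec p d) (basePoint d b) * lineInd p d b w := by
  obtain ⟨t, ht⟩ := exists_basePoint_intercept_add_smul d w
  simp only [lineInd_eq_ite, mul_ite, mul_one, mul_zero, Finset.sum_ite_eq, Finset.mem_univ,
    if_true]
  conv_lhs => rw [← ht]
  exact lineSum_add_smul f _ _ t

lemma sum_lineSum (f : ZMod p × ZMod p → ℚ) (u : ZMod p × ZMod p) :
    ∑ x, lineSum p f u x = p * ∑ v, f v := by
  simp only [lineSum]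
  rw [Finset.sum_comm]
  have shift (t : ZMod p) : ∑ x : ZMod p × ZMod p, f (x + t • u) = ∑ v, f v :=
    Fintype.sum_equiv (Equiv.addRight (t • u)) _ _ fun _ => rfl
  simp [shift, ZMod.card]

lemma FEquidistributed.lineSum_eq {f : ZMod p × ZMod p → ℚ} {u : ZMod p × ZMod p}
    (h : FEquidistributed p f u) (w : ZMod p × ZMod p) :
    lineSum p f u w = (∑ v, f v) / p := by
  have hp : (p : ℚ) ≠ 0 := Nat.cast_ne_zero.mpr (Fact.out : p.Prime).ne_zero
  have hsum := sum_lineSum f u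
  simp only [fun x => h x w, Finset.sum_const, Finset.card_univ, ZMod.card, Fintype.card_prod,
    nsmul_eq_mul, Nat.cast_mul] at hsum
  rw [eq_div_iff hp]
  exact mul_left_cancel₀ hp (by linear_combination hsum)

lemma sum_lineSum_dirVec (f : ZMod p × ZMod p → ℚ) (w : ZMod p × ZMod p) :
    ∑ d, lineSum p f (dirVec p d) w = p * f w + ∑ v, f v := by
  set g : ZMod p × ZMod p → ℚ := fun v => f (w + v)
  have hg : ∑ v, g v = ∑ v, f v := Fintype.sum_equiv (Equiv.addLeft w) _ _ fun _ => rfl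
  have slopes (t : ZMod p) (ht : t ≠ 0) : ∑ m, g (t, t * m) = ∑ s, g (t, s) :=
    Fintype.sum_bijective _ (mul_right_injective₀ ht).bijective_of_finite _ _ fun _ => rfl
  calc ∑ d, lineSum p f (dirVec p d) w
      = ∑ s, g (0, s) + ∑ t, ∑ m, g (t, t * m) := by
        rw [Fintype.sum_option]
        simp only [lineSum, dirVec, Prod.smul_mk, smul_eq_mul, mul_zero, mul_one]
        exact congrArg _ Finset.sum_comm
    _ = ∑ s, g (0, s) + (p * g (0, 0) + ∑ t ∈ {0}ᶜ, ∑ s, g (t, s)) := by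
        rw [Fintype.sum_eq_add_sum_compl 0 fun t => ∑ m, g (t, t * m),
          Finset.sum_congr rfl fun t ht => slopes t (by simpa using ht)]
        simp [ZMod.card]
    _ = p * f w + ∑ v, f v := by
        rw [← hg, Fintype.sum_prod_type, Fintype.sum_eq_add_sum_compl 0 fun t => ∑ s, g (t, s)]
        simp only [g, Prod.mk_zero_zero, add_zero]
        ring

lemma exists_eq_sum_lineSum_div_add_const {f : ZMod p × ZMod p → ℚ}
    {D : Finset (Option (ZMod p))} (h : ∀ d ∉ D, FEquidistributed p f (dirVec p d)) :
    ∃ C : ℚ, ∀ w, f w = (∑ d ∈ D, lineSum p f (dirVec p d) w) / p + C := by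
  have hp : (p : ℚ) ≠ 0 := Nat.cast_ne_zero.mpr (Fact.out : p.Prime).ne_zero
  refine ⟨(Dᶜ.card * ((∑ v, f v) / p) - ∑ v, f v) / p, fun w => ?_⟩
  have hcompl : ∑ d ∈ Dᶜ, lineSum p f (dirVec p d) w = Dᶜ.card * ((∑ v, f v) / p) := by
    rw [Finset.sum_congr rfl fun d hd => (h d (Finset.mem_compl.mp hd)).lineSum_eq w]
    simp
  have hall := sum_lineSum_dirVec f w
  rw [← Finset.sum_add_sum_compl D, hcompl] at hall
  rw [← add_div, eq_div_iff hp]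
  linear_combination -hall

end LineDecomposition

theorem stmt_12_general (p : ℕ) [Fact p.Prime] (f : ZMod p × ZMod p → ℚ)
    (D : Finset (Option (ZMod p))) (hD : D.Nonempty)
    (h1 : ∀ d ∉ D, FEquidistributed p f (dirVec p d)) :
    ∃ c : Option (ZMod p) → ZMod p → ℚ,
      f = fun w => ∑ d ∈ D, ∑ b : ZMod p, c d b * lineInd p d b w := by
  obtain ⟨d₀, hd₀⟩ := hD
  obtain ⟨C, hC⟩ := exists_eq_sum_lineSum_div_add_const h1
  refine ⟨fun d b => lineSum p f (dirVec p d) (basePoint d b) / p + if d = d₀ then C else 0,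
    funext fun w => ?_⟩
  simp only [hC w, add_mul, Finset.sum_add_distrib, div_mul_eq_mul_div, ← Finset.sum_div,
    ← lineSum_dirVec_eq_sum_lineInd, ite_mul, zero_mul, Finset.sum_ite_irrel,
    Finset.sum_const_zero, ← Finset.mul_sum, sum_lineInd, mul_one, Finset.sum_ite_eq',
    if_pos hd₀]

theorem stmt_12 (p : ℕ) [Fact p.Prime] (f : ZMod p × ZMod p → ℚ)
    (D : Finset (Option (ZMod p))) (hD : D.Nonempty)
    (h1 : ∀ d ∉ D, FEquidistributed p f (dirVec p d))
    (h2 : ∀ d ∈ D, ¬ FEquidistributed p f (dirVec p d)) :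
    ∃ c : Option (ZMod p) → ZMod p → ℚ,
      f = fun w => ∑ d ∈ D, ∑ b : ZMod p, c d b * lineInd p d b w :=
  stmt_12_general p f D hD h1
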